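/- arXiv:2101.12626 — 5 statements merged into one kernel-verified Lean document; each statement's English description precedes it below -/
import Mathlib

section
/- Let k ∈ (0,1). There exists a constant C > 0 depending only on k such that for every t ≥ 1, z ∈ ℝ, and y ∈ [z − A_k(t), z + A_k(t)], the kernel K₁(t,z;y;2,0,k) = E(t,z;1,y;2,0,k) satisfies K₁(t,z;y;2,0,k) ≥ C t^{k/2 − 1}. -/
noncomputable section
open Real

/-- `φ_k(t) = t^{1-k}/(1-k)`. -/
def phik (k t : ℝ) : ℝ := t ^ (1 - k) / (1 - k)

/-- `A_k(t) = φ_k(t) - φ_k(1)`. -/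
def Ak (k t : ℝ) : ℝ := phik k t - phik k 1

/-- Gauss hypergeometric function `F(a,b;c;z)` via its power series. -/
def hypF (a b c z : ℝ) : ℝ :=
  ∑' m : ℕ, (Polynomial.eval a (ascPochhammer ℝ m) * Polynomial.eval b (ascPochhammer ℝ m)
      * z ^ m) / (Polynomial.eval c (ascPochhammer ℝ m) * (m.factorial : ℝ))

/-- `γ = −k/(2(1−k))`. -/
def gamk (k : ℝ) : ℝ := -k / (2 * (1 - k))

/-- `c = 2^{−1/(1−k)} (1−k)^{k/(1−k)}`. -/
def ck (k : ℝ) : ℝ := (2 : ℝ) ^ (-(1 / (1 - k))) * (1 - k) ^ (k / (1 - k))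

/-- the argument `ζ` of the hypergeometric function. -/
def zeta (k t z b y : ℝ) : ℝ :=
  ((phik k t - phik k b) ^ 2 - (y - z) ^ 2) / ((phik k t + phik k b) ^ 2 - (y - z) ^ 2)

/-- the kernel `E(t,z;b,y;2,0,k)`. -/
def EkerEdS (k t z b y : ℝ) : ℝ :=
  ck k * (b / t) * ((phik k t + phik k b) ^ 2 - (y - z) ^ 2) ^ (-(gamk k))
    * hypF (gamk k) (gamk k) 1 (zeta k t z b y)

/-- the kernel `K₁(t,z;y;2,0,k) = E(t,z;1,y;2,0,k)`. -/
def K1EdS (k t z y : ℝ) : ℝ := EkerEdS k t z 1 y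

lemma hyp_term (g z : ℝ) (m : ℕ) :
    (Polynomial.eval g (ascPochhammer ℝ m) * Polynomial.eval g (ascPochhammer ℝ m)
      * z ^ m) / (Polynomial.eval (1:ℝ) (ascPochhammer ℝ m) * (m.factorial : ℝ))
    = (Polynomial.eval g (ascPochhammer ℝ m))^2 * z ^ m / ((m.factorial : ℝ)^2) := by
  rw [ascPochhammer_eval_one]; ring

lemma hypF_summable (g z : ℝ) (hg : g ≤ 1) (hz0 : 0 ≤ z) (hz1 : z < 1) :
    Summable (fun m : ℕ => (Polynomial.eval g (ascPochhammer ℝ m) * Polynomial.eval g (ascPochhammer ℝ m)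
      * z ^ m) / (Polynomial.eval (1:ℝ) (ascPochhammer ℝ m) * (m.factorial : ℝ))) := by
  simp only [hyp_term]
  set f : ℕ → ℝ := fun m => (Polynomial.eval g (ascPochhammer ℝ m))^2 * z ^ m / ((m.factorial : ℝ)^2) with hf
  obtain ⟨N, hN⟩ := exists_nat_ge ((-g - 1)/2)
  refine summable_of_ratio_norm_eventually_le hz1 ?_
  filter_upwards [Filter.eventually_ge_atTop N] with n hn
  have hnN : ((-g - 1)/2 : ℝ) ≤ n := hN.trans (by exact_mod_cast hn)
  have hfact : (0:ℝ) < (n.factorial : ℝ) := by exact_mod_cast n.factorial_pos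
  have hfn : 0 ≤ f n := by
    apply div_nonneg (mul_nonneg (sq_nonneg _) (pow_nonneg hz0 _)) (sq_nonneg _)
  have hsucc : f (n+1) = f n * ((g + n)^2 * z / ((n:ℝ)+1)^2) := by
    rw [hf]
    simp only [ascPochhammer_succ_right, Polynomial.eval_mul, Polynomial.eval_add,
      Polynomial.eval_X, Polynomial.eval_natCast, Nat.factorial_succ, Nat.cast_mul,
      Nat.cast_add, Nat.cast_one, pow_succ]
    field_simp
  have hratio : (g + n)^2 ≤ ((n:ℝ)+1)^2 := by
    have h1 : g + n ≤ (n:ℝ)+1 := by nlinarith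
    have h2 : -((n:ℝ)+1) ≤ g + n := by nlinarith
    nlinarith
  have hpos : (0:ℝ) < ((n:ℝ)+1)^2 := by positivity
  rw [Real.norm_eq_abs, Real.norm_eq_abs, abs_of_nonneg hfn,
    abs_of_nonneg (by rw [hsucc]; positivity)]
  rw [hsucc]
  have : (g + n)^2 * z / ((n:ℝ)+1)^2 ≤ z := by
    rw [div_le_iff₀ hpos]
    nlinarith
  calc f n * ((g + n)^2 * z / ((n:ℝ)+1)^2) ≤ f n * z := by
        exact mul_le_mul_of_nonneg_left this hfn
    _ = z * f n := mul_comm _ _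

lemma hypF_ge_one (g z : ℝ) (hg : g ≤ 1) (hz0 : 0 ≤ z) (hz1 : z < 1) : 1 ≤ hypF g g 1 z := by
  have hs := hypF_summable g z hg hz0 hz1
  have h0 : (Polynomial.eval g (ascPochhammer ℝ 0) * Polynomial.eval g (ascPochhammer ℝ 0)
      * z ^ 0) / (Polynomial.eval (1:ℝ) (ascPochhammer ℝ 0) * ((0:ℕ).factorial : ℝ)) = 1 := by
    simp
  calc (1:ℝ) = _ := h0.symm
    _ ≤ hypF g g 1 z := by
      refine Summable.le_tsum hs 0 (fun i _ => ?_)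
      rw [hyp_term]
      have : (0:ℝ) < (i.factorial : ℝ) := by exact_mod_cast i.factorial_pos
      positivity

/-- Lower bound for the kernel `K₁`: there is `C = C(k) > 0` with
`K₁(t,z;y;2,0,k) ≥ C t^{k/2−1}` for all `t ≥ 1`, `z ∈ ℝ` and `y ∈ [z−A_k(t), z+A_k(t)]`. -/
theorem K1_lower_bound (k : ℝ) (hk : k ∈ Set.Ioo (0 : ℝ) 1) :
    ∃ C > (0 : ℝ), ∀ t, 1 ≤ t → ∀ z : ℝ, ∀ y ∈ Set.Icc (z - Ak k t) (z + Ak k t),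
      C * t ^ (k / 2 - 1) ≤ K1EdS k t z y := by
  obtain ⟨hk0, hk1⟩ := hk
  have h1k : (0:ℝ) < 1 - k := by linarith
  set p : ℝ := -(gamk k) with hp
  have hppos : 0 < p := by
    rw [hp, gamk]; rw [neg_div, neg_neg]; positivity
  have hck : 0 < ck k := by
    rw [ck]; positivity
  refine ⟨ck k * (4/(1-k)^2) ^ p, by positivity, fun t ht z y hy => ?_⟩
  have ht0 : (0:ℝ) < t := lt_of_lt_of_le one_pos ht
  have hφ1 : phik k 1 = 1/(1-k) := by rw [phik, Real.one_rpow]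
  have hφ1pos : 0 < phik k 1 := by rw [hφ1]; positivity
  have htk1 : (1:ℝ) ≤ t ^ (1-k) := by
    calc (1:ℝ) = 1 ^ (1-k) := (Real.one_rpow _).symm
    _ ≤ t ^ (1-k) := Real.rpow_le_rpow zero_le_one ht h1k.le
  have hφpos : 0 < phik k t := by rw [phik]; positivity
  have hφge : phik k 1 ≤ phik k t := by
    rw [phik, phik, Real.one_rpow]; gcongr
  have hyz : (y - z)^2 ≤ (phik k t - phik k 1)^2 := by
    obtain ⟨h1, h2⟩ := hy
    rw [Ak] at h1 h2
    nlinarith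
  set D : ℝ := (phik k t + phik k 1) ^ 2 - (y - z) ^ 2 with hD
  have hDge : 4 * phik k t * phik k 1 ≤ D := by rw [hD]; nlinarith
  have hDpos : 0 < D := lt_of_lt_of_le (by positivity) hDge
  have hζ0 : 0 ≤ zeta k t z 1 y := by
    rw [zeta]
    exact div_nonneg (by nlinarith) hDpos.le
  have hζ1 : zeta k t z 1 y < 1 := by
    rw [zeta, div_lt_one hDpos]
    nlinarith
  have hg1 : gamk k ≤ 1 := by
    rw [gamk]; rw [neg_div]
    have : 0 ≤ k / (2 * (1 - k)) := by positivity
    linarith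
  have hF : 1 ≤ hypF (gamk k) (gamk k) 1 (zeta k t z 1 y) :=
    hypF_ge_one _ _ hg1 hζ0 hζ1
  -- lower bound on D^p
  have hDp : (4/(1-k)^2) ^ p * t ^ (k/2) ≤ D ^ p := by
    have h4 : (4:ℝ) * phik k t * phik k 1 = (4/(1-k)^2) * t^(1-k) := by
      rw [phik, hφ1]; field_simp
    have e1 : ((4/(1-k)^2) * t^(1-k)) ^ p = (4/(1-k)^2)^p * (t^(1-k))^p := by
      apply Real.mul_rpow (by positivity) (by positivity)
    have e2 : (t^(1-k))^p = t^(k/2) := by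
      rw [← Real.rpow_mul ht0.le]
      congr 1
      rw [hp, gamk]
      field_simp
    calc (4/(1-k)^2) ^ p * t ^ (k/2) = ((4:ℝ) * phik k t * phik k 1) ^ p := by
          rw [h4, e1, e2]
      _ ≤ D ^ p := Real.rpow_le_rpow (by positivity) hDge hppos.le
  have lhs_eq : ck k * (4/(1-k)^2) ^ p * t ^ (k / 2 - 1)
      = ck k * (1/t) * ((4/(1-k)^2) ^ p * t ^ (k/2)) * 1 := by
    have : t ^ (k/2 - 1) = t ^ (k/2) * t⁻¹ := by
      rw [show k/2 - 1 = k/2 + (-1) by ring, Real.rpow_add ht0, Real.rpow_neg_one]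
    rw [this]; ring
  rw [K1EdS, EkerEdS, lhs_eq]
  have := hDp
  gcongr
end
end

section
/- Let k ∈ (0,1). There exists a constant C > 0 depending only on k such that for every t ≥ 1, z ∈ ℝ, and y ∈ [z − A_k(t), z + A_k(t)], the kernel K₀(t,z;y;2,0,k) = 2 E(t,z;1,y;2,0,k) − (∂/∂b) E(t,z;b,y;2,0,k)|_{b=1} satisfies K₀(t,z;y;2,0,k) ≥ C t^{k/2 − 1}. In particular K₀(t,z;y;2,0,k) is positive on this range. -/
noncomputable section
open Real

/-- the kernel `K₀(t,z;y;2,0,k) = 2 E(t,z;1,y;2,0,k) − ∂_b E(t,z;b,y;2,0,k)|_{b=1}`. -/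
def K0EdS (k t z y : ℝ) : ℝ :=
  2 * EkerEdS k t z 1 y - deriv (fun b => EkerEdS k t z b y) 1


/-- coefficients of the hypergeometric series `F(γ,γ;1;·)`. -/
def cpoch (γ : ℝ) (m : ℕ) : ℝ :=
  (Polynomial.eval γ (ascPochhammer ℝ m) / (m.factorial : ℝ)) ^ 2

lemma cpoch_nonneg (γ : ℝ) (m : ℕ) : 0 ≤ cpoch γ m := sq_nonneg _

lemma cpoch_zero (γ : ℝ) : cpoch γ 0 = 1 := by
  simp [cpoch]

lemma pow_ineq (L : ℕ) : ∀ x : ℝ, 1 ≤ x → ((L : ℝ) + x) * x ^ L ≤ (x + 1) ^ L * x := by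
  induction L with
  | zero => intro x hx; simp
  | succ L ih =>
    intro x hx
    have h1 := ih x hx
    have h2 : x ^ L ≤ (x + 1) ^ L :=
      pow_le_pow_left₀ (by linarith) (by linarith) L
    have hxpos : (0:ℝ) < x := by linarith
    have hpnn : (0:ℝ) ≤ x ^ L := by positivity
    push_cast
    calc ((L : ℝ) + 1 + x) * x ^ (L + 1)
        = (((L : ℝ) + x) * x ^ L) * x + x ^ L * x := by ring
      _ ≤ ((x + 1) ^ L * x) * x + (x + 1) ^ L * x := by
          gcongr
      _ = (x + 1) ^ (L + 1) * x := by ring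

lemma poch_abs_le (γ : ℝ) (L : ℕ) (hL : |γ| ≤ L) (m : ℕ) :
    |Polynomial.eval γ (ascPochhammer ℝ m)| ≤ ((m : ℝ) + 1) ^ L * (m.factorial : ℝ) := by
  induction m with
  | zero => simp
  | succ m ih =>
    rw [ascPochhammer_succ_right, Polynomial.eval_mul, abs_mul,
      Polynomial.eval_add, Polynomial.eval_X, Polynomial.eval_natCast]
    have h2 : |γ + m| ≤ (L : ℝ) + m := by
      calc |γ + m| ≤ |γ| + |(m:ℝ)| := abs_add_le _ _
        _ ≤ (L : ℝ) + m := by rw [abs_of_nonneg (by positivity : (0:ℝ) ≤ (m:ℝ))]; linarith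
    have h3 : |Polynomial.eval γ (ascPochhammer ℝ m)| * |γ + m|
        ≤ (((m : ℝ) + 1) ^ L * (m.factorial : ℝ)) * ((L : ℝ) + m) := by
      apply mul_le_mul ih h2 (abs_nonneg _)
      positivity
    refine h3.trans ?_
    have key := pow_ineq L ((m : ℝ) + 1) (by linarith [Nat.cast_nonneg (α := ℝ) m])
    have hf : (0 : ℝ) < (m.factorial : ℝ) := by exact_mod_cast m.factorial_pos
    push_cast [Nat.factorial_succ]
    nlinarith [pow_nonneg (by linarith [Nat.cast_nonneg (α := ℝ) m] : (0:ℝ) ≤ (m:ℝ)+1) L]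

lemma cpoch_le (γ : ℝ) (m : ℕ) :
    cpoch γ m ≤ ((m : ℝ) + 1) ^ (2 * (⌈|γ|⌉₊)) := by
  set L := ⌈|γ|⌉₊ with hLdef
  have hL : |γ| ≤ (L : ℝ) := Nat.le_ceil _
  have h := poch_abs_le γ L hL m
  have hf : (0 : ℝ) < (m.factorial : ℝ) := by exact_mod_cast m.factorial_pos
  have h2 : |Polynomial.eval γ (ascPochhammer ℝ m) / (m.factorial : ℝ)| ≤ ((m : ℝ) + 1) ^ L := by
    rw [abs_div, abs_of_pos hf, div_le_iff₀ hf]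
    simpa using h
  calc cpoch γ m = |Polynomial.eval γ (ascPochhammer ℝ m) / (m.factorial : ℝ)| ^ 2 := by
        rw [cpoch, sq_abs]
    _ ≤ (((m : ℝ) + 1) ^ L) ^ 2 := by
        apply pow_le_pow_left₀ (abs_nonneg _) h2
    _ = ((m : ℝ) + 1) ^ (2 * L) := by rw [← pow_mul, mul_comm]

/-- master summability: `∑ (m+1)^j r^m` for `0 < r < 1`. -/
lemma summable_master (j : ℕ) {r : ℝ} (h0 : 0 < r) (h1 : r < 1) :
    Summable (fun m : ℕ => ((m : ℝ) + 1) ^ j * r ^ m) := by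
  have hbase : Summable (fun n : ℕ => (n : ℝ) ^ j * r ^ n) :=
    summable_pow_mul_geometric_of_norm_lt_one j (by rwa [Real.norm_eq_abs, abs_of_pos h0])
  have hshift : Summable (fun m : ℕ => ((m + 1 : ℕ) : ℝ) ^ j * r ^ (m + 1)) :=
    (summable_nat_add_iff 1).2 hbase
  have := hshift.mul_right r⁻¹
  refine this.congr fun m => ?_
  push_cast
  field_simp
  ring

lemma summable_cpoch_mul (γ : ℝ) {x r : ℝ} (h0 : 0 < r) (h1 : r < 1) (hx : |x| ≤ r) :
    Summable (fun m : ℕ => cpoch γ m * x ^ m) := by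
  refine Summable.of_norm_bounded ((summable_master (2 * ⌈|γ|⌉₊) h0 h1)) fun m => ?_
  rw [Real.norm_eq_abs, abs_mul, abs_of_nonneg (cpoch_nonneg γ m), abs_pow]
  have h2 : |x| ^ m ≤ r ^ m := pow_le_pow_left₀ (abs_nonneg x) hx m
  have h3 : (0:ℝ) ≤ ((m : ℝ) + 1) ^ (2 * ⌈|γ|⌉₊) := by positivity
  exact mul_le_mul (cpoch_le γ m) h2 (by positivity) h3

lemma hypF_eq (γ z : ℝ) : hypF γ γ 1 z = ∑' m : ℕ, cpoch γ m * z ^ m := by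
  unfold hypF cpoch
  congr 1
  funext m
  have hf : ((m.factorial : ℝ)) ≠ 0 := by exact_mod_cast m.factorial_ne_zero
  rw [ascPochhammer_eval_one]
  field_simp

lemma hypF_ge_one_s9 (γ : ℝ) {z : ℝ} (h0 : 0 ≤ z) (h1 : z < 1) : 1 ≤ hypF γ γ 1 z := by
  rw [hypF_eq]
  have hs : Summable (fun m : ℕ => cpoch γ m * z ^ m) :=
    summable_cpoch_mul γ (by linarith : (0:ℝ) < (1 + z)/2) (by linarith)
      (by rw [abs_of_nonneg h0]; linarith)
  have h := Summable.le_tsum hs 0 (fun m _ => mul_nonneg (cpoch_nonneg γ m) (pow_nonneg h0 m))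
  simpa [cpoch_zero] using h

lemma hypF_hasDerivAt (γ : ℝ) {z₀ : ℝ} (h0 : 0 ≤ z₀) (h1 : z₀ < 1) :
    ∃ D : ℝ, 0 ≤ D ∧ HasDerivAt (fun z => hypF γ γ 1 z) D z₀ := by
  set r : ℝ := (1 + z₀) / 2 with hr
  have hr0 : 0 < r := by rw [hr]; linarith
  have hr1 : r < 1 := by rw [hr]; linarith
  have hz₀r : z₀ < r := by rw [hr]; linarith
  set u : ℕ → ℝ := fun n => ((n : ℝ) + 1) ^ (2 * ⌈|γ|⌉₊ + 1) * r ^ n / r with hu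
  have hu_sum : Summable u := ((summable_master _ hr0 hr1).div_const r)
  have key : HasDerivAt (fun zz : ℝ => ∑' n : ℕ, cpoch γ n * zz ^ n)
      (∑' n : ℕ, cpoch γ n * ((n : ℝ) * z₀ ^ (n - 1))) z₀ := by
    refine hasDerivAt_tsum_of_isPreconnected (g' := fun n yy => cpoch γ n * ((n:ℝ) * yy ^ (n-1))) (y₀ := 0) hu_sum (isOpen_Ioo (a := -r) (b := r))
      (isPreconnected_Ioo) (fun n y _ => ?_) (fun n y hy => ?_) ?_ ?_ ?_
    · exact (hasDerivAt_pow n y).const_mul (cpoch γ n)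
    · have hyr : |y| ≤ r := by
        rw [abs_le]; exact ⟨(hy.1).le, (hy.2).le⟩
      rw [Real.norm_eq_abs, abs_mul, abs_of_nonneg (cpoch_nonneg γ n), abs_mul, abs_pow]
      have hb : |y| ^ (n - 1) ≤ r ^ (n - 1) := pow_le_pow_left₀ (abs_nonneg y) hyr _
      rw [hu]
      rcases Nat.eq_zero_or_pos n with hn | hn
      · subst hn; simp; positivity
      · have hrn : r ^ (n - 1) = r ^ n / r := by
          rw [eq_div_iff (ne_of_gt hr0), ← pow_succ, Nat.sub_add_cancel hn]
        have hcb := cpoch_le γ n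
        have h5 : |(n:ℝ)| = (n:ℝ) := abs_of_nonneg (Nat.cast_nonneg n)
        rw [h5]
        calc cpoch γ n * ((n:ℝ) * |y| ^ (n - 1))
            ≤ ((n : ℝ) + 1) ^ (2 * ⌈|γ|⌉₊) * (((n:ℝ) + 1) * r ^ (n-1)) := by
              apply mul_le_mul hcb _ (by positivity) (by positivity)
              apply mul_le_mul (by linarith) hb (by positivity) (by linarith [Nat.cast_nonneg (α := ℝ) n])
          _ = ((n : ℝ) + 1) ^ (2 * ⌈|γ|⌉₊ + 1) * r ^ (n - 1) := by ring
          _ = ((n : ℝ) + 1) ^ (2 * ⌈|γ|⌉₊ + 1) * r ^ n / r := by rw [hrn]; ring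
    · exact ⟨by linarith, hr0⟩
    · exact summable_cpoch_mul γ hr0 hr1 (by simpa using hr0.le)
    · exact ⟨by linarith, hz₀r⟩
  refine ⟨∑' n : ℕ, cpoch γ n * ((n : ℝ) * z₀ ^ (n - 1)), ?_, ?_⟩
  · apply tsum_nonneg
    intro n
    have : (0:ℝ) ≤ z₀ ^ (n-1) := pow_nonneg h0 _
    have := cpoch_nonneg γ n
    positivity
  · apply key.congr_of_eventuallyEq
    filter_upwards with zz using hypF_eq γ zz

set_option maxHeartbeats 1000000 in
/-- Lower bound for the kernel `K₀`: there is `C = C(k) > 0` with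
`K₀(t,z;y;2,0,k) ≥ C t^{k/2−1}` for all `t ≥ 1`, `z ∈ ℝ` and `y ∈ [z−A_k(t), z+A_k(t)]`;
in particular `K₀` is positive on this range. -/
theorem K0_lower_bound (k : ℝ) (hk : k ∈ Set.Ioo (0 : ℝ) 1) :
    ∃ C > (0 : ℝ), ∀ t, 1 ≤ t → ∀ z : ℝ, ∀ y ∈ Set.Icc (z - Ak k t) (z + Ak k t),
      C * t ^ (k / 2 - 1) ≤ K0EdS k t z y ∧ 0 < K0EdS k t z y := by
  obtain ⟨hk0, hk1⟩ := hk
  have h1k : (0:ℝ) < 1 - k := by linarith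
  have hγneg : gamk k < 0 := div_neg_of_neg_of_pos (by linarith) (by linarith)
  have hmγ : -(gamk k) = k / (2*(1-k)) := by rw [gamk]; ring
  have hck : 0 < ck k := mul_pos (Real.rpow_pos_of_pos two_pos _) (Real.rpow_pos_of_pos h1k _)
  have hApos : (0:ℝ) < (4/(1-k)^2) ^ (k/(2*(1-k))) := Real.rpow_pos_of_pos (by positivity) _
  have hCpos : (0:ℝ) < ck k * (1 - k/2) * ((4/(1-k)^2) ^ (k/(2*(1-k)))) := by
    have h2 : (0:ℝ) < 1 - k/2 := by linarith
    positivity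
  refine ⟨ck k * (1 - k/2) * ((4/(1-k)^2) ^ (k/(2*(1-k)))), hCpos, ?_⟩
  intro t ht z y hy
  have ht0 : (0:ℝ) < t := lt_of_lt_of_le one_pos ht
  have hφ1 : phik k 1 = 1/(1-k) := by rw [phik, Real.one_rpow]
  have hφ1pos : 0 < phik k 1 := by rw [hφ1]; positivity
  have hφtpos : 0 < phik k t := div_pos (Real.rpow_pos_of_pos ht0 _) h1k
  have hφt1 : phik k 1 ≤ phik k t := by
    have h1 : (1:ℝ) ^ (1-k) ≤ t ^ (1-k) := Real.rpow_le_rpow zero_le_one ht (le_of_lt h1k)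
    rw [Real.one_rpow] at h1
    rw [phik, phik, Real.one_rpow]
    exact (div_le_div_iff_of_pos_right h1k).mpr h1
  -- |y - z| ≤ A_k t
  have hd : (y - z)^2 ≤ (phik k t - phik k 1)^2 := by
    have h1 := hy.1
    have h2 := hy.2
    rw [Ak] at h1 h2
    exact sq_le_sq' (by linarith) (by linarith)
  have hN0 : 0 ≤ (phik k t - phik k 1)^2 - (y - z)^2 := by linarith
  have hQ₀pos : 0 < (phik k t + phik k 1)^2 - (y - z)^2 := by
    nlinarith [mul_pos hφtpos hφ1pos]
  have hQN : ((phik k t + phik k 1)^2 - (y - z)^2) - ((phik k t - phik k 1)^2 - (y - z)^2)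
      = 4 * phik k t * phik k 1 := by ring
  -- the hypergeometric argument at b = 1
  have hzeq : zeta k t z 1 y
      = ((phik k t - phik k 1)^2 - (y - z)^2) / ((phik k t + phik k 1)^2 - (y - z)^2) := rfl
  have hz0 : 0 ≤ zeta k t z 1 y := by
    rw [hzeq]; exact div_nonneg hN0 hQ₀pos.le
  have hz1 : zeta k t z 1 y < 1 := by
    rw [hzeq, div_lt_one hQ₀pos]
    nlinarith [mul_pos hφtpos hφ1pos]
  obtain ⟨D, hD0, hDF⟩ := hypF_hasDerivAt (gamk k) hz0 hz1
  have hF1 : 1 ≤ hypF (gamk k) (gamk k) 1 (zeta k t z 1 y) := hypF_ge_one_s9 (gamk k) hz0 hz1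
  -- derivative of phik at b = 1
  have hφd : HasDerivAt (fun b : ℝ => phik k b) 1 1 := by
    have h := (Real.hasDerivAt_rpow_const (x := (1:ℝ)) (p := 1-k)
      (Or.inl one_ne_zero)).div_const (1-k)
    have he : (1-k) * (1:ℝ) ^ (1-k-1) / (1-k) = 1 := by
      rw [Real.one_rpow]; field_simp
    rw [he] at h
    exact h
  -- derivative of Q = (φ t + φ b)² - (y-z)² at b = 1
  have hQd : HasDerivAt (fun b : ℝ => (phik k t + phik k b)^2 - (y - z)^2)
      (2 * (phik k t + phik k 1)) 1 := by
    have h := ((hφd.const_add (phik k t)).pow 2).sub_const ((y - z)^2)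
    convert h using 1
    all_goals norm_num
    all_goals rfl
  have hNd : HasDerivAt (fun b : ℝ => (phik k t - phik k b)^2 - (y - z)^2)
      (-(2 * (phik k t - phik k 1))) 1 := by
    have h := ((hφd.const_sub (phik k t)).pow 2).sub_const ((y - z)^2)
    convert h using 1
    all_goals norm_num
    all_goals rfl
  have hQrd : HasDerivAt (fun b : ℝ => ((phik k t + phik k b)^2 - (y - z)^2) ^ (-(gamk k)))
      ((-(gamk k)) * ((phik k t + phik k 1)^2 - (y - z)^2) ^ (-(gamk k) - 1)
        * (2 * (phik k t + phik k 1))) 1 := by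
    have h := hQd.rpow_const (p := -(gamk k)) (Or.inl (ne_of_gt hQ₀pos))
    convert h using 1
    ring
  have hζd : HasDerivAt (fun b : ℝ => zeta k t z b y)
      (((-(2 * (phik k t - phik k 1))) * ((phik k t + phik k 1)^2 - (y - z)^2)
          - ((phik k t - phik k 1)^2 - (y - z)^2) * (2 * (phik k t + phik k 1)))
        / ((phik k t + phik k 1)^2 - (y - z)^2)^2) 1 :=
    hNd.div hQd (ne_of_gt hQ₀pos)
  have hFd : HasDerivAt (fun b : ℝ => hypF (gamk k) (gamk k) 1 (zeta k t z b y))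
      (D * (((-(2 * (phik k t - phik k 1))) * ((phik k t + phik k 1)^2 - (y - z)^2)
          - ((phik k t - phik k 1)^2 - (y - z)^2) * (2 * (phik k t + phik k 1)))
        / ((phik k t + phik k 1)^2 - (y - z)^2)^2)) 1 := by
    have h := hDF.comp 1 hζd
    exact h
  have hlind : HasDerivAt (fun b : ℝ => ck k * (b / t)) (ck k * (1/t)) 1 :=
    ((hasDerivAt_id 1).div_const t).const_mul (ck k)
  -- total derivative of E in b at b = 1
  have hEd : HasDerivAt (fun b : ℝ => EkerEdS k t z b y)
      ((ck k * (1/t) * (((phik k t + phik k 1)^2 - (y - z)^2) ^ (-(gamk k)))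
        + ck k * (1 / t) * ((-(gamk k)) * ((phik k t + phik k 1)^2 - (y - z)^2) ^ (-(gamk k) - 1)
            * (2 * (phik k t + phik k 1))))
          * hypF (gamk k) (gamk k) 1 (zeta k t z 1 y)
        + ck k * (1 / t) * (((phik k t + phik k 1)^2 - (y - z)^2) ^ (-(gamk k)))
          * (D * (((-(2 * (phik k t - phik k 1))) * ((phik k t + phik k 1)^2 - (y - z)^2)
              - ((phik k t - phik k 1)^2 - (y - z)^2) * (2 * (phik k t + phik k 1)))
            / ((phik k t + phik k 1)^2 - (y - z)^2)^2))) 1 := by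
    have h := (hlind.mul hQrd).mul hFd
    exact h
  have hK0 : K0EdS k t z y =
      ck k * (1/t) * ((((phik k t + phik k 1)^2 - (y - z)^2) ^ (-(gamk k)))
          * hypF (gamk k) (gamk k) 1 (zeta k t z 1 y)
        - ((-(gamk k)) * ((phik k t + phik k 1)^2 - (y - z)^2) ^ (-(gamk k) - 1)
            * (2 * (phik k t + phik k 1)))
          * hypF (gamk k) (gamk k) 1 (zeta k t z 1 y)
        - (((phik k t + phik k 1)^2 - (y - z)^2) ^ (-(gamk k)))
          * (D * (((-(2 * (phik k t - phik k 1))) * ((phik k t + phik k 1)^2 - (y - z)^2)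
              - ((phik k t - phik k 1)^2 - (y - z)^2) * (2 * (phik k t + phik k 1)))
            / ((phik k t + phik k 1)^2 - (y - z)^2)^2))) := by
    rw [K0EdS, hEd.deriv, EkerEdS]
    ring
  -- notation for the main quantities
  have hX : 0 < (((phik k t + phik k 1)^2 - (y - z)^2)) ^ (-(gamk k)) :=
    Real.rpow_pos_of_pos hQ₀pos _
  have hQm1 : ((phik k t + phik k 1)^2 - (y - z)^2) ^ (-(gamk k) - 1)
      = (((phik k t + phik k 1)^2 - (y - z)^2) ^ (-(gamk k)))
        / ((phik k t + phik k 1)^2 - (y - z)^2) :=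
    Real.rpow_sub_one (ne_of_gt hQ₀pos) _
  -- the slope of ζ is nonpositive
  have hζ'le : (((-(2 * (phik k t - phik k 1))) * ((phik k t + phik k 1)^2 - (y - z)^2)
      - ((phik k t - phik k 1)^2 - (y - z)^2) * (2 * (phik k t + phik k 1)))
        / ((phik k t + phik k 1)^2 - (y - z)^2)^2) ≤ 0 := by
    apply div_nonpos_of_nonpos_of_nonneg _ (sq_nonneg _)
    have h1 : 0 ≤ (phik k t - phik k 1) * ((phik k t + phik k 1)^2 - (y - z)^2) :=
      mul_nonneg (by linarith) hQ₀pos.le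
    have h2 : 0 ≤ ((phik k t - phik k 1)^2 - (y - z)^2) * (2 * (phik k t + phik k 1)) :=
      mul_nonneg hN0 (by linarith)
    nlinarith
  -- the key coefficient bound : (-γ) * 2s ≤ (k/2) * Q₀
  have h2s : 2 * (phik k t + phik k 1) ≤ (1-k) * ((phik k t + phik k 1)^2 - (y - z)^2) := by
    have h4 : (1-k) * (4 * phik k t * phik k 1) = 4 * phik k t := by
      rw [hφ1]; field_simp
    have hQ4 : 4 * phik k t * phik k 1 ≤ (phik k t + phik k 1)^2 - (y - z)^2 := by
      nlinarith [hN0]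
    have h5 := mul_le_mul_of_nonneg_left hQ4 h1k.le
    linarith
  have hcoef : (-(gamk k)) * (2 * (phik k t + phik k 1))
      ≤ (k/2) * ((phik k t + phik k 1)^2 - (y - z)^2) := by
    rw [hmγ]
    rw [div_mul_eq_mul_div, div_le_iff₀ (by linarith : (0:ℝ) < 2*(1-k))]
    nlinarith [mul_le_mul_of_nonneg_left h2s hk0.le]
  -- lower bound for the bracket
  have hbr : (1 - k/2) * ((((phik k t + phik k 1)^2 - (y - z)^2)) ^ (-(gamk k)))
      ≤ (((phik k t + phik k 1)^2 - (y - z)^2) ^ (-(gamk k)))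
          * hypF (gamk k) (gamk k) 1 (zeta k t z 1 y)
        - ((-(gamk k)) * ((phik k t + phik k 1)^2 - (y - z)^2) ^ (-(gamk k) - 1)
            * (2 * (phik k t + phik k 1)))
          * hypF (gamk k) (gamk k) 1 (zeta k t z 1 y)
        - (((phik k t + phik k 1)^2 - (y - z)^2) ^ (-(gamk k)))
          * (D * (((-(2 * (phik k t - phik k 1))) * ((phik k t + phik k 1)^2 - (y - z)^2)
              - ((phik k t - phik k 1)^2 - (y - z)^2) * (2 * (phik k t + phik k 1)))
            / ((phik k t + phik k 1)^2 - (y - z)^2)^2)) := by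
    have hterm3 : (((phik k t + phik k 1)^2 - (y - z)^2) ^ (-(gamk k)))
        * (D * (((-(2 * (phik k t - phik k 1))) * ((phik k t + phik k 1)^2 - (y - z)^2)
            - ((phik k t - phik k 1)^2 - (y - z)^2) * (2 * (phik k t + phik k 1)))
          / ((phik k t + phik k 1)^2 - (y - z)^2)^2)) ≤ 0 := by
      apply mul_nonpos_of_nonneg_of_nonpos hX.le
      exact mul_nonpos_of_nonneg_of_nonpos hD0 hζ'le
    have hterm2 : ((-(gamk k)) * ((phik k t + phik k 1)^2 - (y - z)^2) ^ (-(gamk k) - 1)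
          * (2 * (phik k t + phik k 1)))
          * hypF (gamk k) (gamk k) 1 (zeta k t z 1 y)
        ≤ ((k/2) * (((phik k t + phik k 1)^2 - (y - z)^2) ^ (-(gamk k))))
          * hypF (gamk k) (gamk k) 1 (zeta k t z 1 y) := by
      apply mul_le_mul_of_nonneg_right _ (by linarith : (0:ℝ) ≤ hypF (gamk k) (gamk k) 1 (zeta k t z 1 y))
      have hLHS : (-(gamk k)) * ((((phik k t + phik k 1)^2 - (y - z)^2) ^ (-(gamk k)))
            / ((phik k t + phik k 1)^2 - (y - z)^2)) * (2 * (phik k t + phik k 1))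
          = ((-(gamk k)) * (2 * (phik k t + phik k 1)))
            * (((phik k t + phik k 1)^2 - (y - z)^2) ^ (-(gamk k)))
            / ((phik k t + phik k 1)^2 - (y - z)^2) := by ring
      rw [hQm1, hLHS, div_le_iff₀ hQ₀pos]
      nlinarith [mul_le_mul_of_nonneg_right hcoef hX.le]
    have hmul : (1 - k/2) * ((((phik k t + phik k 1)^2 - (y - z)^2)) ^ (-(gamk k)))
        ≤ (1 - k/2) * ((((phik k t + phik k 1)^2 - (y - z)^2)) ^ (-(gamk k)))
          * hypF (gamk k) (gamk k) 1 (zeta k t z 1 y) := by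
      nlinarith [mul_nonneg (mul_nonneg (by linarith : (0:ℝ) ≤ 1 - k/2) hX.le)
        (by linarith : (0:ℝ) ≤ hypF (gamk k) (gamk k) 1 (zeta k t z 1 y) - 1)]
    nlinarith
  -- assemble
  have hmain : ck k * (1/t) * ((1 - k/2)
      * ((((phik k t + phik k 1)^2 - (y - z)^2)) ^ (-(gamk k)))) ≤ K0EdS k t z y := by
    rw [hK0]
    apply mul_le_mul_of_nonneg_left hbr
    positivity
  -- relate X to the power of t
  have hXlow : (4/(1-k)^2) ^ (k/(2*(1-k))) * t ^ (k/2)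
      ≤ (((phik k t + phik k 1)^2 - (y - z)^2)) ^ (-(gamk k)) := by
    have he : 4 * phik k t * phik k 1 = (4/(1-k)^2) * t ^ (1-k) := by
      rw [phik, hφ1]; field_simp
    have h1 : (4/(1-k)^2) * t ^ (1-k) ≤ (phik k t + phik k 1)^2 - (y - z)^2 := by
      rw [← he]; linarith
    have h2 : ((4/(1-k)^2) * t ^ (1-k)) ^ (-(gamk k))
        ≤ (((phik k t + phik k 1)^2 - (y - z)^2)) ^ (-(gamk k)) :=
      Real.rpow_le_rpow (by positivity) h1 (by linarith)
    have h3 : ((4/(1-k)^2) * t ^ (1-k)) ^ (-(gamk k))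
        = (4/(1-k)^2) ^ (-(gamk k)) * (t ^ (1-k)) ^ (-(gamk k)) :=
      Real.mul_rpow (by positivity) (by positivity)
    have h4 : (t ^ (1-k)) ^ (-(gamk k)) = t ^ ((1-k) * (-(gamk k))) :=
      (Real.rpow_mul ht0.le _ _).symm
    have h5 : (1-k) * (-(gamk k)) = k/2 := by
      rw [hmγ]; field_simp
    have h6 : (4/(1-k)^2 : ℝ) ^ (-(gamk k)) = (4/(1-k)^2) ^ (k/(2*(1-k))) := by
      rw [hmγ]
    rw [h3, h4, h5, h6] at h2
    exact h2
  have htpow : t ^ (k/2 - 1) = t ^ (k/2) / t := Real.rpow_sub_one (ne_of_gt ht0) _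
  have htpowpos : 0 < t ^ (k/2 - 1) := Real.rpow_pos_of_pos ht0 _
  have hfinal : ck k * (1 - k/2) * ((4/(1-k)^2) ^ (k/(2*(1-k)))) * t ^ (k/2 - 1)
      ≤ K0EdS k t z y := by
    calc ck k * (1 - k/2) * ((4/(1-k)^2) ^ (k/(2*(1-k)))) * t ^ (k/2 - 1)
        = (ck k * (1 - k/2) * (1/t)) * ((4/(1-k)^2) ^ (k/(2*(1-k))) * t ^ (k/2)) := by
          rw [htpow]; field_simp
      _ ≤ (ck k * (1 - k/2) * (1/t))
          * ((((phik k t + phik k 1)^2 - (y - z)^2)) ^ (-(gamk k))) := by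
          apply mul_le_mul_of_nonneg_left hXlow
          have h2 : (0:ℝ) < 1 - k/2 := by linarith
          positivity
      _ = ck k * (1/t) * ((1 - k/2)
          * ((((phik k t + phik k 1)^2 - (y - z)^2)) ^ (-(gamk k)))) := by ring
      _ ≤ K0EdS k t z y := hmain
  exact ⟨hfinal, lt_of_lt_of_le (by positivity) hfinal⟩
end
end

section
/- Let k ∈ (0,1), t > 1, z ∈ ℝ, and set ζ(t,z;b,y;k) = ((φ_k(t)−φ_k(b))² − (y−z)²)/((φ_k(t)+φ_k(b))² − (y−z)²). Then for b ∈ (0,t) and |y − z| < φ_k(t) − φ_k(b) one has ∂ζ/∂b (t,z;b,y;k) = −4 b^{−k} φ_k(t) · (φ_k(t)² − φ_k(b)² − (y−z)²) / ((φ_k(t)+φ_k(b))² − (y−z)²)², and for every y ∈ [z − A_k(t), z + A_k(t)], ∂ζ/∂b (t,z;b,y;k)|_{b=1} ≤ − 8 φ_k(t) φ_k(1) (φ_k(t) − φ_k(1)) / ((φ_k(t)+φ_k(1))² − (y−z)²)² ≤ 0. -/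
noncomputable section
open Real

lemma zeta_aux (k t z y b : ℝ) (hk : k ∈ Set.Ioo (0 : ℝ) 1) (hb : 0 < b)
    (hD : (phik k t + phik k b) ^ 2 - (y - z) ^ 2 ≠ 0) :
    HasDerivAt (fun s => zeta k t z s y)
      (-4 * b ^ (-k) * phik k t * ((phik k t) ^ 2 - (phik k b) ^ 2 - (y - z) ^ 2)
        / (((phik k t + phik k b) ^ 2 - (y - z) ^ 2) ^ 2)) b := by
  have hk1 : (1 : ℝ) - k ≠ 0 := by have := hk.2; linarith
  have hφ : HasDerivAt (fun s => phik k s) (b ^ (-k)) b := by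
    have h := (Real.hasDerivAt_rpow_const (x := b) (p := 1 - k) (Or.inl hb.ne')).div_const (1 - k)
    have : (1 : ℝ) - k - 1 = -k := by ring
    rw [this] at h
    refine h.congr_deriv ?_
    field_simp
  set u := phik k t with hu
  have hnum : HasDerivAt (fun s => (u - phik k s) ^ 2 - (y - z) ^ 2)
      (2 * (u - phik k b) * (-(b ^ (-k)))) b := by
    have h1 := ((hasDerivAt_const b u).sub hφ).pow 2
    simpa [mul_comm, mul_assoc, mul_left_comm] using h1.sub_const ((y - z) ^ 2)
  have hden : HasDerivAt (fun s => (u + phik k s) ^ 2 - (y - z) ^ 2)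
      (2 * (u + phik k b) * (b ^ (-k))) b := by
    have h1 := ((hasDerivAt_const b u).add hφ).pow 2
    simpa [mul_comm, mul_assoc, mul_left_comm] using h1.sub_const ((y - z) ^ 2)
  have h := hnum.div hden hD
  refine h.congr_deriv ?_
  field_simp
  ring

/-- Formula for `∂ζ/∂b` inside the light cone, and the sign estimate for
`∂ζ/∂b|_{b=1}` for `y ∈ [z − A_k(t), z + A_k(t)]`. -/
theorem zeta_deriv_b (k t z : ℝ) (hk : k ∈ Set.Ioo (0 : ℝ) 1) (ht : 1 < t) :
    (∀ b ∈ Set.Ioo (0 : ℝ) t, ∀ y : ℝ, |y - z| < phik k t - phik k b →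
      HasDerivAt (fun s => zeta k t z s y)
        (-4 * b ^ (-k) * phik k t * ((phik k t) ^ 2 - (phik k b) ^ 2 - (y - z) ^ 2)
          / (((phik k t + phik k b) ^ 2 - (y - z) ^ 2) ^ 2)) b) ∧
    (∀ y ∈ Set.Icc (z - Ak k t) (z + Ak k t),
      deriv (fun s => zeta k t z s y) 1
          ≤ -(8 * phik k t * phik k 1 * (phik k t - phik k 1))
              / (((phik k t + phik k 1) ^ 2 - (y - z) ^ 2) ^ 2) ∧
      -(8 * phik k t * phik k 1 * (phik k t - phik k 1))
          / (((phik k t + phik k 1) ^ 2 - (y - z) ^ 2) ^ 2) ≤ 0) := by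
  
  have hk1 : (0 : ℝ) < 1 - k := by have := hk.2; linarith
  have ht0 : (0 : ℝ) < t := by linarith
  have hu : 0 < phik k t := by
    have : (0 : ℝ) < t ^ (1 - k) := Real.rpow_pos_of_pos ht0 _
    exact div_pos this hk1
  constructor
  · intro b hb y hy
    have hv : 0 < phik k b := div_pos (Real.rpow_pos_of_pos hb.1 _) hk1
    refine zeta_aux k t z y b hk hb.1 ?_
    have h1 : |y - z| < phik k t + phik k b := by linarith
    have h2 : (y - z) ^ 2 < (phik k t + phik k b) ^ 2 := by
      nlinarith [abs_nonneg (y - z), sq_abs (y - z)]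
    linarith
  · intro y hy
    set u := phik k t with hudef
    set v := phik k 1 with hvdef
    have hv : 0 < v := by
      rw [hvdef, phik, Real.one_rpow]
      positivity
    have huv : v < u := by
      have : (1 : ℝ) < t ^ (1 - k) := (Real.one_lt_rpow_iff_of_pos ht0).mpr (Or.inl ⟨ht, hk1⟩)
      rw [hudef, hvdef, phik, phik, Real.one_rpow]
      exact div_lt_div_of_pos_right this hk1
    have hw : (y - z) ^ 2 ≤ (u - v) ^ 2 := by
      have h1 : |y - z| ≤ u - v := by
        rw [abs_le]
        constructor <;> [skip; skip] <;>
          · have := hy.1; have := hy.2; simp only [Ak] at *; linarith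
      nlinarith [abs_nonneg (y - z), sq_abs (y - z)]
    have hD : (0 : ℝ) < (u + v) ^ 2 - (y - z) ^ 2 := by nlinarith
    have hder := zeta_aux k t z y 1 hk one_pos hD.ne'
    rw [hder.deriv]
    have h1k : (1 : ℝ) ^ (-k) = 1 := Real.one_rpow _
    rw [h1k]
    constructor
    · show -4 * 1 * u * (u ^ 2 - v ^ 2 - (y - z) ^ 2) / (((u + v) ^ 2 - (y - z) ^ 2) ^ 2) ≤ _
      rw [div_le_div_iff₀ (by positivity) (by positivity)]
      nlinarith [mul_nonneg (mul_nonneg hu.le (sub_nonneg.2 hw)) (sq_nonneg ((u + v) ^ 2 - (y - z) ^ 2))]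
    · apply div_nonpos_of_nonpos_of_nonneg
      · nlinarith [mul_pos (mul_pos hu hv) (sub_pos.mpr huv)]
      · positivity
end
end

section
/- Let p > 1, C > 0, R > 0 and M, ε > 0. Suppose G : [R, Z) → ℝ is C¹, positive, satisfies G(R) = Mε, and G'(z) ≥ C (R+z)^{−1} G(z)ᵖ for all z ∈ [R, Z). Then for all z ∈ [R, Z): (Mε)^{1−p} − G(z)^{1−p} ≥ C (p−1) log((R+z)/(2R)). Consequently Z ≤ 2R exp((Mε)^{1−p}/(C(p−1))), i.e. no such G can exist on [R, Z) if C(p−1) log((R+Z)/(2R)) > (Mε)^{1−p}. -/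
noncomputable section
open Real

/-- Critical-case ordinary differential inequality comparison: if `G` is a positive C¹
function on `[R,Z)` with `G(R) = Mε` and `G'(z) ≥ C (R+z)^{−1} G(z)ᵖ`, then
`(Mε)^{1−p} − G(z)^{1−p} ≥ C(p−1) log((R+z)/(2R))` on `[R,Z)`, and consequently
`Z ≤ 2R exp((Mε)^{1−p}/(C(p−1)))`. -/
theorem ode_comparison_critical
    (p C R M ε Z : ℝ) (hp : 1 < p) (hC : 0 < C) (hR : 0 < R) (hM : 0 < M) (hε : 0 < ε)
    (hRZ : R < Z) (G : ℝ → ℝ)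
    (hG : ContDiffOn ℝ 1 G (Set.Ico R Z))
    (hpos : ∀ z ∈ Set.Ico R Z, 0 < G z)
    (hGR : G R = M * ε)
    (hode : ∀ z ∈ Set.Ico R Z,
      C * (R + z)⁻¹ * G z ^ p ≤ derivWithin G (Set.Ico R Z) z) :
    (∀ z ∈ Set.Ico R Z,
      C * (p - 1) * Real.log ((R + z) / (2 * R)) ≤ (M * ε) ^ (1 - p) - G z ^ (1 - p)) ∧
    Z ≤ 2 * R * Real.exp ((M * ε) ^ (1 - p) / (C * (p - 1))) := by
  have hp' : (0:ℝ) < p - 1 := by linarith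
  set s := Set.Ico R Z with hs
  have hconv : Convex ℝ s := convex_Ico R Z
  have hGd : DifferentiableOn ℝ G s := hG.differentiableOn one_ne_zero
  have hRz : ∀ z ∈ s, 0 < R + z := by
    intro z hz
    have := hz.1
    linarith
  set φ : ℝ → ℝ := fun z => G z ^ (1 - p) + C * (p - 1) * Real.log (R + z) with hφ
  have hφc : ContinuousOn φ s := by
    apply ContinuousOn.add
    · exact hGd.continuousOn.rpow_const (fun z hz => Or.inl (hpos z hz).ne')
    · exact continuousOn_const.mul
        ((continuousOn_const.add continuousOn_id).log (fun z hz => (hRz z hz).ne'))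
  have hint : interior s = Set.Ioo R Z := interior_Ico
  have hder : ∀ x ∈ interior s, HasDerivAt φ
      ((1 - p) * G x ^ (1 - p - 1) * derivWithin G s x + C * (p - 1) * (R + x)⁻¹) x := by
    intro x hx
    rw [hint] at hx
    have hxs : x ∈ s := Set.Ioo_subset_Ico_self hx
    have hnhds : s ∈ nhds x := Ico_mem_nhds hx.1 hx.2
    have hG' : HasDerivAt G (derivWithin G s x) x :=
      (hGd x hxs).hasDerivWithinAt.hasDerivAt hnhds
    have h1 : HasDerivAt (fun z => G z ^ (1 - p))
        (derivWithin G s x * (1 - p) * G x ^ (1 - p - 1)) x :=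
      hG'.rpow_const (Or.inl (hpos x hxs).ne')
    have h2 : HasDerivAt (fun z => Real.log (R + z)) ((R + x)⁻¹) x := by
      have := ((hasDerivAt_id x).const_add R).log (hRz x hxs).ne'
      simpa using this
    have := h1.add (h2.const_mul (C * (p - 1)))
    refine this.congr_deriv ?_
    ring
  have hder0 : ∀ x ∈ interior s, deriv φ x ≤ 0 := by
    intro x hx
    rw [(hder x hx).deriv]
    have hxs : x ∈ s := by rw [hint] at hx; exact Set.Ioo_subset_Ico_self hx
    have hGx := hpos x hxs
    have hRx := hRz x hxs
    have hineq := hode x hxs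
    have hpow : (0:ℝ) < G x ^ (1 - p - 1) := rpow_pos_of_pos hGx _
    have h3 : (1 - p) * G x ^ (1 - p - 1) * derivWithin G s x ≤
        (1 - p) * G x ^ (1 - p - 1) * (C * (R + x)⁻¹ * G x ^ p) := by
      have hneg : (1 - p) * G x ^ (1 - p - 1) ≤ 0 := by nlinarith
      exact mul_le_mul_of_nonpos_left hineq hneg
    have h4 : G x ^ (1 - p - 1) * G x ^ p = 1 := by
      rw [← Real.rpow_add hGx]
      norm_num
    calc (1 - p) * G x ^ (1 - p - 1) * derivWithin G s x + C * (p - 1) * (R + x)⁻¹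
        ≤ (1 - p) * G x ^ (1 - p - 1) * (C * (R + x)⁻¹ * G x ^ p) + C * (p - 1) * (R + x)⁻¹ := by
          linarith
      _ = (1 - p) * C * (R + x)⁻¹ * (G x ^ (1 - p - 1) * G x ^ p) + C * (p - 1) * (R + x)⁻¹ := by
          ring
      _ = 0 := by rw [h4]; ring
  have hanti : AntitoneOn φ s :=
    antitoneOn_of_deriv_nonpos hconv hφc
      (fun x hx => ((hder x hx).differentiableAt).differentiableWithinAt)
      hder0
  have main : ∀ z ∈ s, C * (p - 1) * Real.log ((R + z) / (2 * R)) ≤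
      (M * ε) ^ (1 - p) - G z ^ (1 - p) := by
    intro z hz
    have hRs : R ∈ s := ⟨le_rfl, hRZ⟩
    have hkey : φ z ≤ φ R := hanti hRs hz hz.1
    have h2R : R + R = 2 * R := by ring
    rw [hφ] at hkey
    simp only [hGR, h2R] at hkey
    have hlog : Real.log ((R + z) / (2 * R)) = Real.log (R + z) - Real.log (2 * R) :=
      Real.log_div (hRz z hz).ne' (by positivity)
    rw [hlog, mul_sub]
    linarith
  refine ⟨main, ?_⟩
  by_contra hcon
  push_neg at hcon
  set t := (M * ε) ^ (1 - p) / (C * (p - 1)) with ht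
  set B := 2 * R * Real.exp t with hB
  have hMε : (0:ℝ) < (M * ε) ^ (1 - p) := rpow_pos_of_pos (by positivity) _
  have htpos : 0 < t := by positivity
  have hBpos : 2 * R < B := by
    have : 1 < Real.exp t := Real.one_lt_exp_iff.mpr htpos
    nlinarith
  have hBs : B ∈ s := ⟨by linarith, hcon⟩
  have h1 := main B hBs
  have hlogB : Real.log (B / (2 * R)) = t := by
    rw [hB, mul_comm, mul_div_assoc, div_self (by positivity : (2:ℝ)*R ≠ 0), mul_one,
      Real.log_exp]
  have hmono : Real.log (B / (2 * R)) ≤ Real.log ((R + B) / (2 * R)) := by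
    apply Real.log_le_log (by positivity)
    gcongr
    linarith
  have hGB : (0:ℝ) < G B ^ (1 - p) := rpow_pos_of_pos (hpos B hBs) _
  have h2 : C * (p - 1) * t ≤ C * (p - 1) * Real.log ((R + B) / (2 * R)) := by
    have h := hlogB ▸ hmono
    exact mul_le_mul_of_nonneg_left h (by positivity)
  have h3 : C * (p - 1) * t = (M * ε) ^ (1 - p) := by
    rw [ht]
    field_simp
  nlinarith
end
end

section
/- Let k ∈ (0,1) and R > 0, and set γ = −k/(2(1−k)) and A_k^{−1}(τ) = ((1−k)(φ_k(1)+τ))^{1/(1−k)}. There exists a constant C > 0 depending only on k and R such that for all z ≥ R, all y ∈ [R, z], and all b ∈ [A_k^{−1}(y−R), A_k^{−1}(y+R)], setting t = A_k^{−1}(z+R) (so that A_k(t) − z = R), the kernel satisfies E(t,z;b,y;2,0,k) ≥ C (A_k^{−1}(y−R)/t) (z+R)^{−γ} (y+R)^{−γ}. -/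
noncomputable section
open Real

/-- `A_k⁻¹(τ) = ((1−k)(φ_k(1)+τ))^{1/(1−k)}`, the inverse of `A_k`. -/
def AkInv (k τ : ℝ) : ℝ := ((1 - k) * (phik k 1 + τ)) ^ (1 / (1 - k))

/-!
On the characteristic `φ_k(t) = φ_k(1) + z + R`, and for `b` in the given range,
`φ_k(t) - φ_k(b) ≥ z - y ≥ 0`, so `ζ ∈ [0, 1)`. There the series `F(γ, γ; 1; ζ)` has nonnegative
terms and converges (its radius is at least `1`), so it is at least its first term `1`. The base
`(φ_k(t) + φ_k(b))² - (y - z)²` factors as a product of two terms bounded below by `y + R` and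
`z + R`, and the exponent `-γ` is nonnegative; with `b ≥ A_k⁻¹(y - R)` this gives the bound with
`C = c`.
-/

theorem one_le_ordinaryHypergeometricSeries_radius {𝕂 : Type*} (𝔸 : Type*) [RCLike 𝕂]
    [NormedDivisionRing 𝔸] [NormedAlgebra 𝕂 𝔸] (a b c : 𝕂) :
    1 ≤ (ordinaryHypergeometricSeries 𝔸 a b c).radius := by
  by_cases habc : ∀ kn : ℕ, (kn : 𝕂) ≠ -a ∧ (kn : 𝕂) ≠ -b ∧ (kn : 𝕂) ≠ -c
  · exact (ordinaryHypergeometricSeries_radius_eq_one 𝔸 a b c habc).ge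
  simp only [not_forall, not_and_or, not_not] at habc
  obtain ⟨kn, h | h | h⟩ := habc
  · rw [neg_eq_iff_eq_neg.1 h.symm, ordinaryHypergeometric_radius_top_of_neg_nat₁]; exact le_top
  · rw [neg_eq_iff_eq_neg.1 h.symm, ordinaryHypergeometric_radius_top_of_neg_nat₂]; exact le_top
  · rw [neg_eq_iff_eq_neg.1 h.symm, ordinaryHypergeometric_radius_top_of_neg_nat₃]; exact le_top

theorem hypF_eq_ordinaryHypergeometric (a b c z : ℝ) : hypF a b c z = ₂F₁ a b c z := by
  rw [hypF, ordinaryHypergeometric, ordinaryHypergeometric_sum_eq]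
  refine tsum_congr fun m => ?_
  rw [smul_eq_mul, div_eq_mul_inv, mul_inv]
  ring

theorem one_le_ordinaryHypergeometric_self {a c x : ℝ} (hc : 0 < c) (hx₀ : 0 ≤ x) (hx₁ : x < 1) :
    1 ≤ ₂F₁ a a c x := by
  have hterm_nonneg : ∀ n, 0 ≤ ordinaryHypergeometricSeries ℝ a a c n fun _ => x := fun n => by
    have := ascPochhammer_pos n c hc
    have := pow_nonneg hx₀ n
    rw [ordinaryHypergeometricSeries_apply_eq, smul_eq_mul]
    convert_to 0 ≤ Polynomial.eval a (ascPochhammer ℝ n) ^ 2 * x ^ n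
      / (n.factorial * Polynomial.eval c (ascPochhammer ℝ n)) using 1
    · ring
    · positivity
  have hsummable : Summable fun n => ordinaryHypergeometricSeries ℝ a a c n fun _ => x := by
    refine .of_norm (FormalMultilinearSeries.summable_norm_apply _ ?_)
    refine lt_of_lt_of_le ?_ (one_le_ordinaryHypergeometricSeries_radius ℝ a a c)
    rw [edist_dist, dist_zero_right, Real.norm_of_nonneg hx₀]
    exact ENNReal.ofReal_lt_one.2 hx₁
  calc (1 : ℝ) = ordinaryHypergeometricSeries ℝ a a c 0 fun _ => x := by
        simp [ordinaryHypergeometricSeries, ordinaryHypergeometricCoefficient]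
    _ ≤ ₂F₁ a a c x := hsummable.le_tsum 0 fun n _ => hterm_nonneg n

theorem ck_pos {k : ℝ} (hk : k < 1) : 0 < ck k := by
  have : 0 < 1 - k := by linarith
  unfold ck
  positivity

theorem neg_gamk_nonneg {k : ℝ} (hk : k ∈ Set.Ioo (0 : ℝ) 1) : 0 ≤ -gamk k := by
  have : 0 < 1 - k := by linarith [hk.2]
  rw [gamk, neg_div, neg_neg]
  exact div_nonneg hk.1.le (by positivity)

theorem phik_one_pos {k : ℝ} (hk : k < 1) : 0 < phik k 1 := by
  have : 0 < 1 - k := by linarith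
  rw [phik, Real.one_rpow]
  positivity

theorem phik_monotoneOn {k : ℝ} (hk : k < 1) : MonotoneOn (phik k) (Set.Ici 0) :=
  fun _ hu _ _ huv => div_le_div_of_nonneg_right
    (Real.rpow_le_rpow hu huv (by linarith)) (by linarith)

theorem AkInv_pos {k τ : ℝ} (hk : k < 1) (hτ : 0 < phik k 1 + τ) : 0 < AkInv k τ :=
  Real.rpow_pos_of_pos (mul_pos (by linarith) hτ) _

theorem phik_AkInv {k τ : ℝ} (hk : k < 1) (hτ : 0 ≤ phik k 1 + τ) :
    phik k (AkInv k τ) = phik k 1 + τ := by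
  have hk' : 1 - k ≠ 0 := by linarith
  rw [phik, AkInv, ← Real.rpow_mul (mul_nonneg (by linarith) hτ), one_div_mul_cancel hk',
    Real.rpow_one, mul_div_cancel_left₀ _ hk']

theorem zeta_mem_Ico {k t z b y : ℝ} (hb : 0 < phik k b) (h : |y - z| ≤ phik k t - phik k b) :
    zeta k t z b y ∈ Set.Ico 0 1 := by
  have hsq : (y - z) ^ 2 ≤ (phik k t - phik k b) ^ 2 := sq_le_sq' (abs_le.1 h).1 (abs_le.1 h).2
  have ht : 0 < phik k t := by linarith [abs_nonneg (y - z)]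
  have hlt : (phik k t - phik k b) ^ 2 - (y - z) ^ 2 < (phik k t + phik k b) ^ 2 - (y - z) ^ 2 := by
    nlinarith [mul_pos ht hb]
  have hnum : 0 ≤ (phik k t - phik k b) ^ 2 - (y - z) ^ 2 := sub_nonneg.2 hsq
  exact ⟨div_nonneg hnum (hnum.trans hlt.le), (div_lt_one (hnum.trans_lt hlt)).2 hlt⟩

theorem le_EkerEdS {k t z b y M : ℝ} (hk : k ∈ Set.Ioo (0 : ℝ) 1) (ht : 0 ≤ t) (hb : 0 ≤ b)
    (hζ : zeta k t z b y ∈ Set.Ico 0 1) (hM : 0 ≤ M)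
    (hMD : M ≤ (phik k t + phik k b) ^ 2 - (y - z) ^ 2) :
    ck k * (b / t) * M ^ (-gamk k) ≤ EkerEdS k t z b y := by
  have hF : 1 ≤ hypF (gamk k) (gamk k) 1 (zeta k t z b y) := by
    rw [hypF_eq_ordinaryHypergeometric]
    exact one_le_ordinaryHypergeometric_self one_pos hζ.1 hζ.2
  have := ck_pos hk.2
  have hγ := neg_gamk_nonneg hk
  have hbase := Real.rpow_nonneg (hM.trans hMD) (-gamk k)
  calc ck k * (b / t) * M ^ (-gamk k) = ck k * (b / t) * M ^ (-gamk k) * 1 := (mul_one _).symm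
    _ ≤ EkerEdS k t z b y := by unfold EkerEdS; gcongr

/-- Lower bound for the kernel `E(t,z;b,y;2,0,k)` on the characteristic
`A_k(t) − z = R` (i.e. `t = A_k⁻¹(z+R)`), for `y ∈ [R,z]` and
`b ∈ [A_k⁻¹(y−R), A_k⁻¹(y+R)]`:
`E ≥ C (A_k⁻¹(y−R)/t) (z+R)^{−γ} (y+R)^{−γ}` with `C = C(k,R) > 0`. -/
theorem kernel_lower_bound_on_characteristic
    (k R : ℝ) (hk : k ∈ Set.Ioo (0 : ℝ) 1) (hR : 0 < R) :
    ∃ C > (0 : ℝ), ∀ z : ℝ, R ≤ z → ∀ y ∈ Set.Icc R z,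
      ∀ b ∈ Set.Icc (AkInv k (y - R)) (AkInv k (y + R)),
        C * (AkInv k (y - R) / AkInv k (z + R))
            * (z + R) ^ (-(gamk k)) * (y + R) ^ (-(gamk k))
          ≤ EkerEdS k (AkInv k (z + R)) z b y := by
  have hφ1 := phik_one_pos hk.2
  refine ⟨ck k, ck_pos hk.2, fun z _ y ⟨hRy, hyz⟩ b ⟨hb₁, hb₂⟩ => ?_⟩
  set t := AkInv k (z + R)
  have ht : 0 < t := AkInv_pos hk.2 (by linarith)
  have hb₀ : 0 < AkInv k (y - R) := AkInv_pos hk.2 (by linarith)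
  have hφt : phik k t = phik k 1 + (z + R) := phik_AkInv hk.2 (by linarith)
  have hφb₁ : phik k 1 + (y - R) ≤ phik k b :=
    phik_AkInv (τ := y - R) hk.2 (by linarith) ▸
      phik_monotoneOn hk.2 hb₀.le (hb₀.le.trans hb₁) hb₁
  have hφb₂ : phik k b ≤ phik k 1 + (y + R) :=
    phik_AkInv (τ := y + R) hk.2 (by linarith) ▸
      phik_monotoneOn hk.2 (hb₀.le.trans hb₁) (hb₀.le.trans (hb₁.trans hb₂)) hb₂
  have hζ : zeta k t z b y ∈ Set.Ico 0 1 :=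
    zeta_mem_Ico (by linarith) (abs_le.2 ⟨by linarith, by linarith⟩)
  have hD : (z + R) * (y + R) ≤ (phik k t + phik k b) ^ 2 - (y - z) ^ 2 := by
    -- the right side is `(φ t + φ b - (z - y)) * (φ t + φ b + (z - y))`; compare factor by factor
    rw [hφt]; nlinarith
  have hzy : 0 ≤ (z + R) * (y + R) := mul_nonneg (by linarith) (by linarith)
  calc ck k * (AkInv k (y - R) / t) * (z + R) ^ (-gamk k) * (y + R) ^ (-gamk k)
      = ck k * (AkInv k (y - R) / t) * ((z + R) * (y + R)) ^ (-gamk k) := by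
        rw [Real.mul_rpow (by linarith) (by linarith), mul_assoc]
    _ ≤ ck k * (b / t) * ((z + R) * (y + R)) ^ (-gamk k) := by
        have := ck_pos hk.2
        have := Real.rpow_nonneg hzy (-gamk k)
        gcongr
    _ ≤ EkerEdS k t z b y := le_EkerEdS hk ht.le (hb₀.le.trans hb₁) hζ hzy hD
end
end
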